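/- Cone–sawtooth equivalence: There exist constants c, C > 0, depending only on n, the ADR constant C_E and the grid and Whitney constants, such that for every Q ∈ 𝔻 and every measurable F : Ω → [0,∞]: c ∬_{𝒯_Q} F(Y) dY / δ(Y) ≤ ∫_Q ∬_{Γ_Q(x)} F(Y) dY / δ(Y)^{n+1} dσ(x) ≤ C ∬_{𝒯_Q} F(Y) dY / δ(Y), where 𝒯_Q := ⋃ {U_{Q′} : Q′ ∈ 𝔻, Q′ ⊆ Q}. In particular, for any function b with Θb defined on Ω, the condition ∫_Q ∬_{Γ_Q(x)} |Θb(Y)|² dY / δ(Y)^{n+1} dσ(x) ≤ C₀ σ(Q) is equivalent, up to a change of the constant, to ∬_{𝒯_Q} |Θb(Y)|² dY / δ(Y) ≤ C₀′ σ(Q). -/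

import Mathlib

/-! By Tonelli, the cone integral equals `∫_{𝒯_Q} F(Y) δ(Y)^{-n-1} σ({x ∈ Q : Y ∈ Γ_Q(x)}) dY`,
so it suffices that this "shadow" of `Y` has measure comparable to `δ(Y)^n` for `Y ∈ 𝒯_Q`.
From below: if `Y ∈ U_{Q'}` with `Q' ⊆ Q`, the whole of `Q'` lies in the shadow, and
`ℓ(Q') ≈ δ(Y)` by the Whitney property. From above: every `x` in the shadow lies within
`C δ(Y)` of `Y`, so the shadow sits in a surface ball of radius `≈ δ(Y)`; its measure is
`≲ δ(Y)^n` by upper Ahlfors regularity, or, when the radius exceeds `diam E`, by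
`σ(Q) ≲ ℓ(Q)^n` with `ℓ(Q) < diam E`. -/

open MeasureTheory Metric Set ENNReal NNReal

noncomputable section

namespace LocalTb

/-- The ambient Euclidean space `ℝ^{n+1}`. -/
abbrev Amb (n : ℕ) := EuclideanSpace ℝ (Fin (n + 1))

variable {n : ℕ} {E : Set (Amb n)}

/-- `σ`, the restriction of `n`-dimensional Hausdorff measure to `E`. -/
def sigmaE (n : ℕ) (E : Set (Amb n)) : Measure (Amb n) := μH[(n : ℝ)].restrict E

/-- `δ(X) = dist(X, E)`. -/
def del (E : Set (Amb n)) (X : Amb n) : ℝ := Metric.infDist X E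

/-- `E` is a closed `n`-dimensional Ahlfors-David regular set with constant `CE`. -/
def IsADR (n : ℕ) (E : Set (Amb n)) (CE : ℝ) : Prop :=
  IsClosed E ∧ 1 ≤ CE ∧
  ∀ x ∈ E, ∀ r : ℝ, 0 < r → ENNReal.ofReal r < EMetric.diam E →
    ENNReal.ofReal (CE⁻¹ * r ^ n) ≤ sigmaE n E (ball x r) ∧
      sigmaE n E (ball x r) ≤ ENNReal.ofReal (CE * r ^ n)

/-- The operator `Θ f (X) = ∫_E ψ(X,y) f(y) dσ(y)`. -/
def Theta (n : ℕ) (E : Set (Amb n)) (ψ : Amb n → Amb n → ℂ) (f : Amb n → ℂ)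
    (X : Amb n) : ℂ :=
  ∫ y, ψ X y * f y ∂(sigmaE n E)

/-- The standard size and Hölder conditions on the kernel `ψ`, with exponent `α` and
constant `Cψ`, on `Ω × E` where `Ω = ℝ^{n+1} \ E`. -/
def KernelCond (n : ℕ) (E : Set (Amb n)) (ψ : Amb n → Amb n → ℂ) (α Cψ : ℝ) : Prop :=
  0 < α ∧ 0 < Cψ ∧ Measurable (Function.uncurry ψ) ∧
  (∀ X, X ∉ E → ∀ y ∈ E,
    ‖ψ X y‖ ≤ Cψ * del E X ^ α / dist X y ^ ((n : ℝ) + α)) ∧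
  (∀ X, X ∉ E → ∀ y ∈ E, ∀ y' ∈ E, 2 * dist y y' ≤ dist X y →
    ‖ψ X y - ψ X y'‖ ≤ Cψ * dist y y' ^ α / dist X y ^ ((n : ℝ) + α))

/-- A dyadic grid (Christ-David cubes) on `E`. -/
structure DyadicGrid (n : ℕ) (E : Set (Amb n)) where
  Dk : ℤ → Set (Set (Amb n))
  α₀ : ℝ
  η₀ : ℝ
  C₁ : ℝ
  C₂ : ℝ
  α₀_pos : 0 < α₀
  η₀_mem : η₀ ∈ Set.Ioc (0 : ℝ) 1
  C₁_pos : 0 < C₁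
  C₂_pos : 0 < C₂
  scale_admissible : ∀ k : ℤ, (Dk k).Nonempty →
    ENNReal.ofReal ((2 : ℝ) ^ (-k)) < EMetric.diam E
  measurableSet : ∀ k, ∀ Q ∈ Dk k, MeasurableSet Q
  subset_E : ∀ k, ∀ Q ∈ Dk k, Q ⊆ E
  cover : ∀ k : ℤ, ENNReal.ofReal ((2 : ℝ) ^ (-k)) < EMetric.diam E → ⋃₀ Dk k = E
  pairwise_disj : ∀ k, ∀ Q ∈ Dk k, ∀ Q' ∈ Dk k, Q ≠ Q' → Q ∩ Q' = ∅
  nested : ∀ ⦃k k' : ℤ⦄, k < k' → ∀ Q ∈ Dk k, ∀ Q' ∈ Dk k', Q' ⊆ Q ∨ Q' ∩ Q = ∅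
  parent_unique : ∀ ⦃k k' : ℤ⦄, k < k' →
    ENNReal.ofReal ((2 : ℝ) ^ (-k)) < EMetric.diam E →
    ∀ Q' ∈ Dk k', ∃! Q, Q ∈ Dk k ∧ Q' ⊆ Q
  diam_bound : ∀ k, ∀ Q ∈ Dk k,
    ENNReal.ofReal (C₁⁻¹ * (2 : ℝ) ^ (-k)) ≤ EMetric.diam Q ∧
      EMetric.diam Q ≤ ENNReal.ofReal (C₁ * (2 : ℝ) ^ (-k))
  meas_bound : ∀ k, ∀ Q ∈ Dk k,
    ENNReal.ofReal (C₁⁻¹ * (2 : ℝ) ^ (-(k * (n : ℤ)))) ≤ sigmaE n E Q ∧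
      sigmaE n E Q ≤ ENNReal.ofReal (C₁ * (2 : ℝ) ^ (-(k * (n : ℤ))))
  surface_ball : ∀ k, ∀ Q ∈ Dk k, ∃ x ∈ Q, ball x (α₀ * (2 : ℝ) ^ (-k)) ∩ E ⊆ Q
  thin_boundary : ∀ k, ∀ Q ∈ Dk k, ∀ τ ∈ Set.Ioo (0 : ℝ) α₀,
    sigmaE n E {x ∈ Q | Metric.infDist x (E \ Q) ≤ τ * (2 : ℝ) ^ (-k)} ≤
      ENNReal.ofReal (C₂ * τ ^ η₀) * sigmaE n E Q

/-- The distance between two sets. -/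
def setDist (A B : Set (Amb n)) : ℝ := (⨅ x ∈ A, EMetric.infEdist x B).toReal

/-- The closed axis-parallel cube centered at `c` with side length `2^{-m}`. -/
def closedCube (c : Amb n) (m : ℤ) : Set (Amb n) :=
  {Y | ∀ i, |Y i - c i| ≤ (2 : ℝ) ^ (-m) / 2}

/-- The concentric dilate `tI` of the cube `closedCube c m`. -/
def dilCube (c : Amb n) (m : ℤ) (t : ℝ) : Set (Amb n) :=
  {Y | ∀ i, |Y i - c i| ≤ t * ((2 : ℝ) ^ (-m) / 2)}

/-- A Whitney decomposition of `Ω = ℝ^{n+1} \ E`: a family of closed cubes with dyadic side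
lengths (a cube is recorded as its center together with the scale `m`, the side being
`2^{-m}`), with pairwise disjoint interiors, covering `Ω`, and at the right distance
from `E`. -/
structure Whitney (n : ℕ) (E : Set (Amb n)) where
  cubes : Set (Amb n × ℤ)
  disj_int : ∀ p ∈ cubes, ∀ q ∈ cubes, p ≠ q →
    interior (closedCube p.1 p.2) ∩ interior (closedCube q.1 q.2) = ∅
  covers : (⋃ p ∈ cubes, closedCube p.1 p.2) = Eᶜ
  dist_lower : ∀ p ∈ cubes,
    4 * Metric.diam (closedCube p.1 p.2) ≤ setDist (dilCube p.1 p.2 4) E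
  dist_mid : ∀ p ∈ cubes, setDist (dilCube p.1 p.2 4) E ≤ setDist (closedCube p.1 p.2) E
  dist_upper : ∀ p ∈ cubes,
    setDist (closedCube p.1 p.2) E ≤ 40 * Metric.diam (closedCube p.1 p.2)

/-- The Whitney cubes `I` entering the Whitney region of a dyadic cube `Q` of
generation `k` (so that `ℓ(Q) = 2^{-k}`), with aperture `β`:
`ℓ(I)/8 ≤ ℓ(Q) ≤ 8 ℓ(I)` and `dist(Q,I) ≤ β ℓ(Q)`. -/
def whitneyIdx (W : Whitney n E) (β : ℝ) (k : ℤ) (Q : Set (Amb n)) : Set (Amb n × ℤ) :=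
  {p ∈ W.cubes | (2 : ℝ) ^ (-p.2) / 8 ≤ (2 : ℝ) ^ (-k) ∧
    (2 : ℝ) ^ (-k) ≤ 8 * (2 : ℝ) ^ (-p.2) ∧
    setDist Q (closedCube p.1 p.2) ≤ β * (2 : ℝ) ^ (-k)}

/-- The Whitney region `U_Q` of a dyadic cube `Q` of generation `k`. -/
def UQ (W : Whitney n E) (β : ℝ) (k : ℤ) (Q : Set (Amb n)) : Set (Amb n) :=
  ⋃ p ∈ whitneyIdx W β k Q, closedCube p.1 p.2

/-- The truncated cone `Γ_Q(x)`. -/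
def cone (G : DyadicGrid n E) (W : Whitney n E) (β : ℝ) (Q : Set (Amb n))
    (x : Amb n) : Set (Amb n) :=
  ⋃ (k' : ℤ), ⋃ Q' ∈ {Q' ∈ G.Dk k' | x ∈ Q' ∧ Q' ⊆ Q}, UQ W β k' Q'

/-- The good sawtooth cone `γ_Q(x)` relative to a family `F` of (dyadic cube, scale)
pairs: the union of Whitney regions of good subcubes `Q' ⊆ Q` containing `x`, i.e.
those such that whenever `Q'` meets some `Q_k ∈ F` then `ℓ(Q') > ℓ(Q_k)`. -/
def goodCone (G : DyadicGrid n E) (W : Whitney n E) (β : ℝ)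
    (F : Set (Set (Amb n) × ℤ)) (Q : Set (Amb n)) (x : Amb n) : Set (Amb n) :=
  ⋃ (k' : ℤ), ⋃ Q' ∈ {Q' ∈ G.Dk k' | x ∈ Q' ∧ Q' ⊆ Q ∧
      ∀ q ∈ F, (Q' ∩ q.1).Nonempty → (2 : ℝ) ^ (-q.2) < (2 : ℝ) ^ (-k')}, UQ W β k' Q'

/-- The conical square function `∬_{Γ_Q(x)} |Θ f(Y)|² dY/δ(Y)^{n+1}`. -/
def coneSq (G : DyadicGrid n E) (W : Whitney n E) (β : ℝ)
    (ψ : Amb n → Amb n → ℂ) (f : Amb n → ℂ) (Q : Set (Amb n)) (x : Amb n) : ℝ≥0∞ :=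
  ∫⁻ Y in cone G W β Q x,
    (‖Theta n E ψ f Y‖₊ : ℝ≥0∞) ^ 2 / ENNReal.ofReal (del E Y ^ (n + 1)) ∂volume

/-- The sawtooth conical square function `∬_{γ_Q(x)} |Θ f(Y)|² dY/δ(Y)^{n+1}`. -/
def goodConeSq (G : DyadicGrid n E) (W : Whitney n E) (β : ℝ)
    (ψ : Amb n → Amb n → ℂ) (F : Set (Set (Amb n) × ℤ)) (f : Amb n → ℂ)
    (Q : Set (Amb n)) (x : Amb n) : ℝ≥0∞ :=
  ∫⁻ Y in goodCone G W β F Q x,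
    (‖Theta n E ψ f Y‖₊ : ℝ≥0∞) ^ 2 / ENNReal.ofReal (del E Y ^ (n + 1)) ∂volume

/-- The dyadic Hardy-Littlewood maximal operator (acting on `ℝ≥0∞`-valued functions). -/
def dyadicMax (G : DyadicGrid n E) (g : Amb n → ℝ≥0∞) (x : Amb n) : ℝ≥0∞ :=
  ⨆ (k : ℤ) (Q : Set (Amb n)) (_ : Q ∈ G.Dk k) (_ : x ∈ Q),
    (sigmaE n E Q)⁻¹ * ∫⁻ y in Q, g y ∂(sigmaE n E)


/-- The sawtooth region `𝒯_Q`, the union of the Whitney regions of all dyadic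
subcubes of `Q`. -/
def TQ (G : DyadicGrid n E) (W : Whitney n E) (β : ℝ) (Q : Set (Amb n)) : Set (Amb n) :=
  ⋃ (k' : ℤ), ⋃ Q' ∈ {Q' ∈ G.Dk k' | Q' ⊆ Q}, UQ W β k' Q'

lemma lintegral_setLIntegral_preimage_eq {α β : Type*} [MeasurableSpace α] [MeasurableSpace β]
    {μ : Measure α} {ν : Measure β} [SFinite μ] [SFinite ν] {A : Set (α × β)}
    (hA : MeasurableSet A) {g : β → ℝ≥0∞} (hg : Measurable g) :
    ∫⁻ x, ∫⁻ y in Prod.mk x ⁻¹' A, g y ∂ν ∂μ = ∫⁻ y, g y * μ ((·, y) ⁻¹' A) ∂ν := by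
  calc ∫⁻ x, ∫⁻ y in Prod.mk x ⁻¹' A, g y ∂ν ∂μ
      = ∫⁻ x, ∫⁻ y, A.indicator (g ∘ Prod.snd) (x, y) ∂ν ∂μ := by
        simp_rw [← lintegral_indicator (measurable_prodMk_left hA)]; rfl
    _ = ∫⁻ y, ∫⁻ x, A.indicator (g ∘ Prod.snd) (x, y) ∂μ ∂ν :=
        lintegral_lintegral_swap ((hg.comp measurable_snd).indicator hA).aemeasurable
    _ = ∫⁻ y, g y * μ ((·, y) ⁻¹' A) ∂ν := by
        simp_rw [← lintegral_indicator_const (measurable_prodMk_right hA)]; rfl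

lemma div_pow_succ_mul_mul_pow {a b d : ℝ≥0∞} (hd₀ : d ≠ 0) (hd : d ≠ ⊤) (n : ℕ) :
    a / d ^ (n + 1) * (b * d ^ n) = b * (a / d) := by
  calc a / d ^ (n + 1) * (b * d ^ n) = b * (a / d) * ((d ^ n)⁻¹ * d ^ n) := by
        rw [pow_succ, div_eq_mul_inv, div_eq_mul_inv,
          ENNReal.mul_inv (Or.inl (pow_ne_zero n hd₀)) (Or.inl (ENNReal.pow_ne_top hd))]
        ring
    _ = b * (a / d) := by
        rw [ENNReal.inv_mul_cancel (pow_ne_zero n hd₀) (ENNReal.pow_ne_top hd), mul_one]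

lemma two_zpow_neg_mul_natCast (k : ℤ) (n : ℕ) :
    (2 : ℝ) ^ (-(k * (n : ℤ))) = ((2 : ℝ) ^ (-k)) ^ n := by
  rw [← zpow_natCast, ← zpow_mul, neg_mul]

lemma isClosed_closedCube (c : Amb n) (m : ℤ) : IsClosed (closedCube c m) := by
  simp only [closedCube, Set.ofPred_forall]
  exact isClosed_iInter fun i => isClosed_le (by fun_prop) continuous_const

lemma closedCube_subset_dilCube (c : Amb n) (m : ℤ) : closedCube c m ⊆ dilCube c m 4 :=
  fun Y hY i => (hY i).trans (le_mul_of_one_le_left (by positivity) (by norm_num))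

lemma closedBall_subset_closedCube (c : Amb n) (m : ℤ) :
    closedBall c ((2 : ℝ) ^ (-m) / 2) ⊆ closedCube c m := fun Y hY i =>
  (Real.dist_eq (Y i) (c i)).symm.le.trans ((PiLp.dist_apply_le Y c i).trans hY)

lemma closedCube_subset_closedBall (c : Amb n) (m : ℤ) :
    closedCube c m ⊆ closedBall c ((n + 1) * ((2 : ℝ) ^ (-m) / 2)) := by
  intro Y hY
  set r : ℝ := (2 : ℝ) ^ (-m) / 2
  have hcoord : ∀ i, dist (Y i) (c i) ^ 2 ≤ r ^ 2 := fun i =>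
    pow_le_pow_left₀ dist_nonneg ((Real.dist_eq _ _).trans_le (hY i)) 2
  rw [mem_closedBall, EuclideanSpace.dist_eq, Real.sqrt_le_iff]
  refine ⟨by positivity, ?_⟩
  calc ∑ i, dist (Y i) (c i) ^ 2 ≤ ∑ _i : Fin (n + 1), r ^ 2 :=
        Finset.sum_le_sum fun i _ => hcoord i
    _ = (n + 1) * r ^ 2 := by simp
    _ ≤ ((n + 1) * r) ^ 2 := by nlinarith [sq_nonneg r]

lemma isBounded_closedCube (c : Amb n) (m : ℤ) : Bornology.IsBounded (closedCube c m) :=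
  isBounded_closedBall.subset (closedCube_subset_closedBall c m)

lemma diam_closedCube_le (c : Amb n) (m : ℤ) :
    diam (closedCube c m) ≤ (n + 1) * (2 : ℝ) ^ (-m) := by
  calc diam (closedCube c m) ≤ 2 * ((n + 1) * ((2 : ℝ) ^ (-m) / 2)) :=
        (diam_mono (closedCube_subset_closedBall c m) isBounded_closedBall).trans
          (diam_closedBall (by positivity))
    _ = (n + 1) * (2 : ℝ) ^ (-m) := by ring

lemma le_diam_closedCube (c : Amb n) (m : ℤ) : (2 : ℝ) ^ (-m) ≤ diam (closedCube c m) := by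
  calc (2 : ℝ) ^ (-m) = diam (closedBall c ((2 : ℝ) ^ (-m) / 2)) := by
        rw [diam_closedBall_eq c (by positivity)]; ring
    _ ≤ diam (closedCube c m) :=
        diam_mono (closedBall_subset_closedCube c m) (isBounded_closedCube c m)

lemma center_mem_interior_closedCube (c : Amb n) (m : ℤ) : c ∈ interior (closedCube c m) :=
  mem_interior_iff_mem_nhds.2 <| Filter.mem_of_superset (closedBall_mem_nhds c (by positivity))
    (closedBall_subset_closedCube c m)

lemma setDist_eq_iInf_infDist {A B : Set (Amb n)} (hB : B.Nonempty) :
    setDist A B = ⨅ a : A, infDist (a : Amb n) B := by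
  rw [setDist, iInf_subtype']
  exact ENNReal.toReal_iInf fun a => infEDist_ne_top hB

lemma setDist_empty (A : Set (Amb n)) : setDist A ∅ = 0 := by
  change (⨅ x ∈ A, infEDist x (∅ : Set (Amb n))).toReal = 0
  simp

lemma setDist_le_infDist {A B : Set (Amb n)} {Y : Amb n} (hY : Y ∈ A) :
    setDist A B ≤ infDist Y B := by
  rcases B.eq_empty_or_nonempty with rfl | hB
  · rw [setDist_empty, infDist_empty]
  rw [setDist_eq_iInf_infDist hB]
  exact ciInf_le ⟨0, Set.forall_mem_range.2 fun _ => infDist_nonneg⟩ (⟨Y, hY⟩ : A)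

lemma infDist_le_setDist_add_diam {A B : Set (Amb n)} (hA : Bornology.IsBounded A)
    {Y : Amb n} (hY : Y ∈ A) : infDist Y B ≤ setDist A B + diam A := by
  rcases B.eq_empty_or_nonempty with rfl | hB
  · rw [setDist_empty, infDist_empty, zero_add]
    exact diam_nonneg
  have : Nonempty A := ⟨⟨Y, hY⟩⟩
  have h : infDist Y B - diam A ≤ ⨅ a : A, infDist (a : Amb n) B := le_ciInf fun a => by
    linarith [infDist_le_infDist_add_dist (x := Y) (y := a) (s := B),
      dist_le_diam_of_mem hA hY a.2]
  rw [setDist_eq_iInf_infDist hB]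
  linarith

lemma dist_le_diam_add_setDist_add_diam {A B : Set (Amb n)} (hA : Bornology.IsBounded A)
    (hB : Bornology.IsBounded B) {x y : Amb n} (hx : x ∈ A) (hy : y ∈ B) :
    dist x y ≤ diam A + setDist A B + diam B := by
  have : Nonempty A := ⟨⟨x, hx⟩⟩
  have h : dist x y - diam A - diam B ≤ ⨅ a : A, infDist (a : Amb n) B :=
    le_ciInf fun a => (le_infDist ⟨y, hy⟩).2 fun b hb => by
      linarith [dist_triangle4 x a b y, dist_le_diam_of_mem hA hx a.2,
        dist_le_diam_of_mem hB hb hy]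
  rw [setDist_eq_iInf_infDist ⟨y, hy⟩]
  linarith

namespace DyadicGrid

variable (G : DyadicGrid n E) {k : ℤ} {Q : Set (Amb n)}

lemma isBounded (hQ : Q ∈ G.Dk k) : Bornology.IsBounded Q :=
  isBounded_iff_ediam_ne_top.2 <|
    ne_top_of_le_ne_top ENNReal.ofReal_ne_top (G.diam_bound k Q hQ).2

lemma diam_le (hQ : Q ∈ G.Dk k) : diam Q ≤ G.C₁ * (2 : ℝ) ^ (-k) :=
  ENNReal.toReal_le_of_le_ofReal (mul_nonneg G.C₁_pos.le (by positivity)) (G.diam_bound k Q hQ).2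

lemma sigmaE_pos (hQ : Q ∈ G.Dk k) : 0 < sigmaE n E Q :=
  (ENNReal.ofReal_pos.2 (mul_pos (inv_pos.2 G.C₁_pos) (by positivity))).trans_le
    (G.meas_bound k Q hQ).1

lemma isFiniteMeasure_restrict (hQ : Q ∈ G.Dk k) : IsFiniteMeasure ((sigmaE n E).restrict Q) :=
  MeasureTheory.isFiniteMeasure_restrict.2 <|
    ne_top_of_le_ne_top ENNReal.ofReal_ne_top (G.meas_bound k Q hQ).2

lemma countable_subcubes (hQ : Q ∈ G.Dk k) (k' : ℤ) : {Q' ∈ G.Dk k' | Q' ⊆ Q}.Countable := by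
  have := G.isFiniteMeasure_restrict hQ
  set S := {Q' ∈ G.Dk k' | Q' ⊆ Q}
  have hpos := Measure.countable_meas_pos_of_disjoint_iUnion (μ := (sigmaE n E).restrict Q)
    (As := fun Q' : S => (Q' : Set (Amb n))) (fun Q' => G.measurableSet k' Q' Q'.2.1)
    fun Q₁ Q₂ h => disjoint_iff_inter_eq_empty.2
      (G.pairwise_disj k' Q₁ Q₁.2.1 Q₂ Q₂.2.1 (Subtype.coe_injective.ne h))
  have huniv : {Q' : S | 0 < (sigmaE n E).restrict Q Q'} = univ :=
    eq_univ_of_forall fun Q' => by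
      rw [mem_setOf_eq, Measure.restrict_eq_self _ Q'.2.2]
      exact G.sigmaE_pos Q'.2.1
  rw [huniv] at hpos
  exact countable_coe_iff.1 (countable_univ_iff.1 hpos)

end DyadicGrid

lemma Whitney.countable_cubes (W : Whitney n E) : W.cubes.Countable :=
  PairwiseDisjoint.countable_of_isOpen
    (fun p hp q hq hpq => disjoint_iff_inter_eq_empty.2 (W.disj_int p hp q hq hpq))
    (fun _ _ => isOpen_interior) fun p _ => ⟨p.1, center_mem_interior_closedCube p.1 p.2⟩

lemma mem_cone {G : DyadicGrid n E} {W : Whitney n E} {β : ℝ} {Q : Set (Amb n)}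
    {x Y : Amb n} :
    Y ∈ cone G W β Q x ↔ ∃ k' Q', Q' ∈ G.Dk k' ∧ x ∈ Q' ∧ Q' ⊆ Q ∧ Y ∈ UQ W β k' Q' := by
  simp only [cone, mem_iUnion, mem_setOf_eq, exists_prop, and_assoc]

lemma mem_TQ {G : DyadicGrid n E} {W : Whitney n E} {β : ℝ} {Q : Set (Amb n)} {Y : Amb n} :
    Y ∈ TQ G W β Q ↔ ∃ k' Q', Q' ∈ G.Dk k' ∧ Q' ⊆ Q ∧ Y ∈ UQ W β k' Q' := by
  simp only [TQ, mem_iUnion, mem_setOf_eq, exists_prop, and_assoc]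

lemma cone_subset_TQ (G : DyadicGrid n E) (W : Whitney n E) (β : ℝ) (Q : Set (Amb n))
    (x : Amb n) : cone G W β Q x ⊆ TQ G W β Q := fun _ hY =>
  let ⟨k', Q', hQ', _, hsub, hY'⟩ := mem_cone.1 hY
  mem_TQ.2 ⟨k', Q', hQ', hsub, hY'⟩

section Whitney

variable {W : Whitney n E} {β : ℝ} {k : ℤ} {Q : Set (Amb n)} {Y : Amb n}

lemma del_mem_Icc_of_mem_UQ (hY : Y ∈ UQ W β k Q) :
    del E Y ∈ Icc ((2 : ℝ) ^ (-k) / 2) (328 * (n + 1) * (2 : ℝ) ^ (-k)) := by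
  obtain ⟨p, ⟨hpW, hIQ, hQI, -⟩, hYp⟩ := mem_iUnion₂.1 hY
  have hdiam := diam_closedCube_le p.1 p.2
  have hdiam' := le_diam_closedCube p.1 p.2
  constructor
  · calc (2 : ℝ) ^ (-k) / 2 ≤ 4 * diam (closedCube p.1 p.2) := by linarith
      _ ≤ setDist (dilCube p.1 p.2 4) E := W.dist_lower p hpW
      _ ≤ del E Y := setDist_le_infDist (closedCube_subset_dilCube p.1 p.2 hYp)
  · calc del E Y ≤ setDist (closedCube p.1 p.2) E + diam (closedCube p.1 p.2) :=
          infDist_le_setDist_add_diam (isBounded_closedCube p.1 p.2) hYp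
      _ ≤ 41 * ((n + 1) * (2 : ℝ) ^ (-p.2)) := by linarith [W.dist_upper p hpW]
      _ ≤ 328 * (n + 1) * (2 : ℝ) ^ (-k) := by nlinarith

lemma del_pos_of_mem_UQ (hY : Y ∈ UQ W β k Q) : 0 < del E Y :=
  lt_of_lt_of_le (by positivity) (del_mem_Icc_of_mem_UQ hY).1

lemma del_pos_of_mem_TQ {G : DyadicGrid n E} (hY : Y ∈ TQ G W β Q) : 0 < del E Y :=
  let ⟨_, _, _, _, hY'⟩ := mem_TQ.1 hY
  del_pos_of_mem_UQ hY'

lemma dist_le_of_mem_UQ (G : DyadicGrid n E) (hQ : Q ∈ G.Dk k) {x : Amb n} (hx : x ∈ Q)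
    (hY : Y ∈ UQ W β k Q) : dist x Y ≤ (G.C₁ + β + 8 * (n + 1)) * (2 : ℝ) ^ (-k) := by
  obtain ⟨p, ⟨-, hIQ, -, hdist⟩, hYp⟩ := mem_iUnion₂.1 hY
  have hdiam := diam_closedCube_le p.1 p.2
  have hQdiam := G.diam_le hQ
  calc dist x Y ≤ diam Q + setDist Q (closedCube p.1 p.2) + diam (closedCube p.1 p.2) :=
        dist_le_diam_add_setDist_add_diam (G.isBounded hQ) (isBounded_closedCube p.1 p.2) hx hYp
    _ ≤ (G.C₁ + β + 8 * (n + 1)) * (2 : ℝ) ^ (-k) := by nlinarith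

lemma dist_le_of_mem_cone {G : DyadicGrid n E} {x : Amb n} (hY : Y ∈ cone G W β Q x) :
    dist x Y ≤ 2 * (G.C₁ + β + 8 * (n + 1)) * del E Y := by
  obtain ⟨k', Q', hQ', hx, -, hY'⟩ := mem_cone.1 hY
  have hdist := dist_le_of_mem_UQ G hQ' hx hY'
  have hdel := (del_mem_Icc_of_mem_UQ hY').1
  have hscale : (0 : ℝ) < (2 : ℝ) ^ (-k') := by positivity
  have hM : 0 ≤ G.C₁ + β + 8 * (n + 1) :=
    nonneg_of_mul_nonneg_left (dist_nonneg.trans hdist) hscale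
  nlinarith

end Whitney

lemma measurableSet_UQ (W : Whitney n E) (β : ℝ) (k : ℤ) (Q : Set (Amb n)) :
    MeasurableSet (UQ W β k Q) :=
  MeasurableSet.biUnion (W.countable_cubes.mono fun _ hp => hp.1) fun p _ =>
    (isClosed_closedCube p.1 p.2).measurableSet

section Measurability

variable (G : DyadicGrid n E) (W : Whitney n E) (β : ℝ) {k : ℤ} {Q : Set (Amb n)}

lemma measurableSet_TQ (hQ : Q ∈ G.Dk k) : MeasurableSet (TQ G W β Q) :=
  MeasurableSet.iUnion fun k' =>
    MeasurableSet.biUnion (G.countable_subcubes hQ k') fun Q' _ => measurableSet_UQ W β k' Q'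

lemma measurableSet_setOf_mem_cone (hQ : Q ∈ G.Dk k) :
    MeasurableSet {z : Amb n × Amb n | z.2 ∈ cone G W β Q z.1} := by
  have : {z : Amb n × Amb n | z.2 ∈ cone G W β Q z.1} =
      ⋃ k', ⋃ Q' ∈ {Q' ∈ G.Dk k' | Q' ⊆ Q}, Q' ×ˢ UQ W β k' Q' := by
    ext z
    simp only [mem_setOf_eq, mem_cone, mem_iUnion, mem_prod, exists_prop]
    grind
  rw [this]
  exact MeasurableSet.iUnion fun k' => MeasurableSet.biUnion (G.countable_subcubes hQ k')
    fun Q' hQ' => (G.measurableSet k' Q' hQ'.1).prod (measurableSet_UQ W β k' Q')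

end Measurability

lemma sigmaE_inter_ball_le {CE : ℝ} (hE : IsADR n E CE) (G : DyadicGrid n E) {k : ℤ}
    {Q : Set (Amb n)} (hQ : Q ∈ G.Dk k) {x : Amb n} (hx : x ∈ E) {ρ : ℝ} (hρ : 0 < ρ) :
    sigmaE n E (Q ∩ ball x ρ) ≤ ENNReal.ofReal ((CE + G.C₁) * ρ ^ n) := by
  have hCE : 0 ≤ CE := zero_le_one.trans hE.2.1
  have hρn : 0 < ρ ^ n := pow_pos hρ n
  by_cases hρE : ENNReal.ofReal ρ < EMetric.diam E
  · calc sigmaE n E (Q ∩ ball x ρ) ≤ sigmaE n E (ball x ρ) := measure_mono inter_subset_right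
      _ ≤ ENNReal.ofReal (CE * ρ ^ n) := (hE.2.2 x hx ρ hρ hρE).2
      _ ≤ ENNReal.ofReal ((CE + G.C₁) * ρ ^ n) :=
          ENNReal.ofReal_le_ofReal (by nlinarith [G.C₁_pos])
  · have hscale : (2 : ℝ) ^ (-k) < ρ := (ENNReal.ofReal_lt_ofReal_iff hρ).1
      ((G.scale_admissible k ⟨Q, hQ⟩).trans_le (not_lt.1 hρE))
    calc sigmaE n E (Q ∩ ball x ρ) ≤ sigmaE n E Q := measure_mono inter_subset_left
      _ ≤ ENNReal.ofReal (G.C₁ * ((2 : ℝ) ^ (-k)) ^ n) := by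
          rw [← two_zpow_neg_mul_natCast]; exact (G.meas_bound k Q hQ).2
      _ ≤ ENNReal.ofReal ((CE + G.C₁) * ρ ^ n) := by
          have : ((2 : ℝ) ^ (-k)) ^ n ≤ ρ ^ n := pow_le_pow_left₀ (by positivity) hscale.le n
          exact ENNReal.ofReal_le_ofReal (by nlinarith [G.C₁_pos])

section Shadow

variable {G : DyadicGrid n E} {W : Whitney n E} {β : ℝ} {k : ℤ} {Q : Set (Amb n)} {Y : Amb n}

lemma le_sigmaE_setOf_mem_cone (hY : Y ∈ TQ G W β Q) :
    ENNReal.ofReal (G.C₁ * (328 * (n + 1)) ^ n)⁻¹ * ENNReal.ofReal (del E Y) ^ n ≤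
      (sigmaE n E).restrict Q {x | Y ∈ cone G W β Q x} := by
  obtain ⟨k', Q', hQ', hsub, hY'⟩ := mem_TQ.1 hY
  have hδ : 0 ≤ del E Y := (del_pos_of_mem_UQ hY').le
  have hδK : del E Y / (328 * (n + 1)) ≤ (2 : ℝ) ^ (-k') :=
    div_le_of_le_mul₀ (by positivity) (by positivity)
      (by linarith [(del_mem_Icc_of_mem_UQ hY').2])
  calc ENNReal.ofReal (G.C₁ * (328 * (n + 1)) ^ n)⁻¹ * ENNReal.ofReal (del E Y) ^ n
      = ENNReal.ofReal (G.C₁⁻¹ * (del E Y / (328 * (n + 1))) ^ n) := by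
        rw [← ENNReal.ofReal_pow hδ, ← ENNReal.ofReal_mul (by have := G.C₁_pos; positivity),
          div_pow, mul_inv]
        ring_nf
    _ ≤ ENNReal.ofReal (G.C₁⁻¹ * ((2 : ℝ) ^ (-k')) ^ n) := by
        have := G.C₁_pos
        gcongr
    _ ≤ sigmaE n E Q' := by rw [← two_zpow_neg_mul_natCast]; exact (G.meas_bound k' Q' hQ').1
    _ = (sigmaE n E).restrict Q Q' := (Measure.restrict_eq_self _ hsub).symm
    _ ≤ (sigmaE n E).restrict Q {x | Y ∈ cone G W β Q x} :=
        measure_mono fun x hx => mem_cone.2 ⟨k', Q', hQ', hx, hsub, hY'⟩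

lemma sigmaE_setOf_mem_cone_le {CE : ℝ} (hE : IsADR n E CE) (hQ : Q ∈ G.Dk k) (hβ : 0 ≤ β) :
    (sigmaE n E).restrict Q {x | Y ∈ cone G W β Q x} ≤
      ENNReal.ofReal ((CE + G.C₁) * (5 * (G.C₁ + β + 8 * (n + 1))) ^ n) *
        ENNReal.ofReal (del E Y) ^ n := by
  rw [Measure.restrict_apply' (G.measurableSet k Q hQ)]
  rcases ({x | Y ∈ cone G W β Q x} ∩ Q).eq_empty_or_nonempty with
    h | ⟨x₀, hx₀ : Y ∈ cone G W β Q x₀, hx₀Q⟩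
  · rw [h, measure_empty]
    exact bot_le
  have hδ : 0 < del E Y := del_pos_of_mem_TQ (cone_subset_TQ G W β Q x₀ hx₀)
  have hM : 0 < G.C₁ + β + 8 * (n + 1) := by have := G.C₁_pos; positivity
  have hsub : {x | Y ∈ cone G W β Q x} ∩ Q ⊆
      Q ∩ ball x₀ (5 * (G.C₁ + β + 8 * (n + 1)) * del E Y) := by
    rintro x ⟨hx : Y ∈ cone G W β Q x, hxQ⟩
    have hxY : dist x Y ≤ 2 * (G.C₁ + β + 8 * (n + 1)) * del E Y := dist_le_of_mem_cone hx
    have hx₀Y : dist x₀ Y ≤ 2 * (G.C₁ + β + 8 * (n + 1)) * del E Y := dist_le_of_mem_cone hx₀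
    refine ⟨hxQ, mem_ball.2 ?_⟩
    linarith [dist_triangle_right x x₀ Y, mul_pos hM hδ]
  calc sigmaE n E ({x | Y ∈ cone G W β Q x} ∩ Q)
      ≤ ENNReal.ofReal ((CE + G.C₁) * (5 * (G.C₁ + β + 8 * (n + 1)) * del E Y) ^ n) :=
        (measure_mono hsub).trans
          (sigmaE_inter_ball_le hE G hQ (G.subset_E k Q hQ hx₀Q) (by positivity))
    _ = ENNReal.ofReal ((CE + G.C₁) * (5 * (G.C₁ + β + 8 * (n + 1))) ^ n) *
          ENNReal.ofReal (del E Y) ^ n := by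
        rw [← ENNReal.ofReal_pow hδ.le, ← ENNReal.ofReal_mul
          (by have := G.C₁_pos; have := hE.2.1; positivity), mul_pow, mul_assoc]

end Shadow

lemma lintegral_cone_eq_setLIntegral_TQ (G : DyadicGrid n E) (W : Whitney n E) (β : ℝ)
    {k : ℤ} {Q : Set (Amb n)} (hQ : Q ∈ G.Dk k) {g : Amb n → ℝ≥0∞} (hg : Measurable g) :
    ∫⁻ x in Q, (∫⁻ Y in cone G W β Q x, g Y) ∂(sigmaE n E) =
      ∫⁻ Y in TQ G W β Q, g Y * (sigmaE n E).restrict Q {x | Y ∈ cone G W β Q x} := by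
  have := G.isFiniteMeasure_restrict hQ
  refine (lintegral_setLIntegral_preimage_eq (measurableSet_setOf_mem_cone G W β hQ) hg).trans
    (setLIntegral_eq_of_support_subset (Function.support_subset_iff'.2 fun Y hY => ?_)).symm
  have : ∀ x, Y ∉ cone G W β Q x := fun x hx => hY (cone_subset_TQ G W β Q x hx)
  simp [this]

theorem cone_sawtooth_equivalence_general
    {n : ℕ} {E : Set (Amb n)} {CE : ℝ} (hE : IsADR n E CE)
    (G : DyadicGrid n E) (W : Whitney n E) {β : ℝ} (hβ : 0 < β) :
    ∃ c C : ℝ, 0 < c ∧ 0 < C ∧ ∀ k, ∀ Q ∈ G.Dk k, ∀ F : Amb n → ℝ≥0∞, Measurable F →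
      ENNReal.ofReal c *
          ∫⁻ Y in TQ G W β Q, F Y / ENNReal.ofReal (del E Y) ∂volume ≤
        (∫⁻ x in Q, (∫⁻ Y in cone G W β Q x,
            F Y / ENNReal.ofReal (del E Y ^ (n + 1)) ∂volume) ∂(sigmaE n E)) ∧
      (∫⁻ x in Q, (∫⁻ Y in cone G W β Q x,
          F Y / ENNReal.ofReal (del E Y ^ (n + 1)) ∂volume) ∂(sigmaE n E)) ≤
        ENNReal.ofReal C *
          ∫⁻ Y in TQ G W β Q, F Y / ENNReal.ofReal (del E Y) ∂volume := by
  have hC₁ := G.C₁_pos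
  have hCE := hE.2.1
  refine ⟨(G.C₁ * (328 * (n + 1)) ^ n)⁻¹, (CE + G.C₁) * (5 * (G.C₁ + β + 8 * (n + 1))) ^ n,
    by positivity, by positivity, fun k Q hQ F hF => ?_⟩
  have hg : Measurable fun Y => F Y / ENNReal.ofReal (del E Y ^ (n + 1)) :=
    hF.div (ENNReal.measurable_ofReal.comp ((continuous_infDist_pt E).measurable.pow_const _))
  have hTQ := measurableSet_TQ G W β hQ
  have hsplit : ∀ b, ∀ Y ∈ TQ G W β Q,
      F Y / ENNReal.ofReal (del E Y ^ (n + 1)) * (b * ENNReal.ofReal (del E Y) ^ n) =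
        b * (F Y / ENNReal.ofReal (del E Y)) := fun b Y hY => by
    have hδ := del_pos_of_mem_TQ hY
    rw [ENNReal.ofReal_pow hδ.le]
    exact div_pow_succ_mul_mul_pow (ENNReal.ofReal_pos.2 hδ).ne' ENNReal.ofReal_ne_top n
  rw [lintegral_cone_eq_setLIntegral_TQ G W β hQ hg, ← lintegral_const_mul' _ _ ofReal_ne_top,
    ← lintegral_const_mul' _ _ ofReal_ne_top]
  constructor
  · refine setLIntegral_mono' hTQ fun Y hY => ?_
    rw [← hsplit _ Y hY]
    exact mul_le_mul_right (le_sigmaE_setOf_mem_cone hY) _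
  · refine setLIntegral_mono' hTQ fun Y hY => ?_
    rw [← hsplit _ Y hY]
    exact mul_le_mul_right (sigmaE_setOf_mem_cone_le hE hQ hβ.le) _

theorem cone_sawtooth_equivalence
    {n : ℕ} (hn : 1 ≤ n) {E : Set (Amb n)} {CE : ℝ} (hE : IsADR n E CE)
    (G : DyadicGrid n E) (W : Whitney n E) {β : ℝ} (hβ : 0 < β)
    (hβne : ∀ k, ∀ Q ∈ G.Dk k, (whitneyIdx W β k Q).Nonempty) :
    ∃ c C : ℝ, 0 < c ∧ 0 < C ∧ ∀ k, ∀ Q ∈ G.Dk k, ∀ F : Amb n → ℝ≥0∞, Measurable F →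
      ENNReal.ofReal c *
          ∫⁻ Y in TQ G W β Q, F Y / ENNReal.ofReal (del E Y) ∂volume ≤
        (∫⁻ x in Q, (∫⁻ Y in cone G W β Q x,
            F Y / ENNReal.ofReal (del E Y ^ (n + 1)) ∂volume) ∂(sigmaE n E)) ∧
      (∫⁻ x in Q, (∫⁻ Y in cone G W β Q x,
          F Y / ENNReal.ofReal (del E Y ^ (n + 1)) ∂volume) ∂(sigmaE n E)) ≤
        ENNReal.ofReal C *
          ∫⁻ Y in TQ G W β Q, F Y / ENNReal.ofReal (del E Y) ∂volume :=
  cone_sawtooth_equivalence_general hE G W hβ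

end LocalTb
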